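/- Let P be a partial transformation semigroup on a finite set Q. Let x, y ∈ P be such that Q·x = Q·(xy). Then x R xy in P, i.e., xS¹ = xyS¹ where S = P. -/

import Mathlib

/-- Partial transformations on `Q` (partial functions `Q → Q`), with
left-to-right composition: `q·(fg) = (q·f)·g`. -/
def PTrans (Q : Type*) : Type _ := Q → Option Q

instance {Q : Type*} : Mul (PTrans Q) := ⟨fun f g => fun q => (f q).bind g⟩

instance {Q : Type*} : Semigroup (PTrans Q) where
  mul_assoc f g h := by
    funext q
    show ((f q).bind g).bind h = (f q).bind (fun x => (g x).bind h)
    cases f q <;> rfl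

/-- The image `R·f` of a set `R` under a partial transformation `f`. -/
def pApply {Q : Type*} (R : Set Q) (f : PTrans Q) : Set Q :=
  {q' | ∃ q ∈ R, f q = some q'}

/-- The right ideal `s·S¹` as a subset of `S¹ = WithOne S`. -/
def rIdeal {S : Type*} [Semigroup S] (s : S) : Set (WithOne S) :=
  {x | ∃ z : WithOne S, x = (s : WithOne S) * z}

/-!
Let `T = Q·x`. Since `Q·(xy) = T·y`, the hypothesis says that `y` maps `T` onto itself; as `T` is
finite, `y` is then defined and injective on `T`. Hence right multiplication by `y` is a
permutation of the finite set of elements of `P` with image `T`, so `x` is a periodic point of it: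
`x = x·yⁿ` for some `n ≥ 1`, which puts `x` in `(xy)·P¹`.
-/

open Set Function

theorem Set.Finite.mem_periodicPts_of_injOn {α : Type*} {f : α → α} {s : Set α}
    (hs : s.Finite) (hmaps : MapsTo f s s) (hinj : InjOn f s) {a : α} (ha : a ∈ s) : a ∈ periodicPts f := by
  have : Finite s := hs.to_subtype
  have hrestrict : Injective (hmaps.restrict f s s) := hmaps.restrict_inj.mpr hinj
  obtain ⟨n, hn, hper⟩ := mem_periodicPts.mp (hrestrict.mem_periodicPts ⟨a, ha⟩)
  refine mk_mem_periodicPts hn ?_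
  simpa only [IsPeriodicPt, IsFixedPt, Subtype.ext_iff, hmaps.coe_iterate_restrict] using hper

theorem Option.bind_injOn {α β : Type*} {g : α → Option β} {R : Set α}
    (hdef : ∀ t ∈ R, g t ≠ none) (hinj : InjOn g R) :
    InjOn (Option.bind · g) {o | ∀ t ∈ o, t ∈ R} := by
  rintro (_ | t) ho (_ | t') ho' h
  · rfl
  · exact absurd h.symm (hdef t' (ho' t' rfl))
  · exact absurd h (hdef t (ho t rfl))
  · rw [hinj (ho t rfl) (ho' t' rfl) h]

section RIdeal

variable {S : Type*} [Semigroup S]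

theorem iterate_mul_right_mem_rIdeal (a b : S) (n : ℕ) :
    (((· * b)^[n] a : S) : WithOne S) ∈ rIdeal a := by
  have hcoe : Semiconj ((↑) : S → WithOne S) (· * b) (· * (b : WithOne S)) :=
    fun c => WithOne.coe_mul c b
  exact ⟨(b : WithOne S) ^ n, by rw [(hcoe.iterate_right n) a, mul_right_iterate_apply]⟩

theorem rIdeal_subset_rIdeal {a b : S} (h : (a : WithOne S) ∈ rIdeal b) :
    rIdeal a ⊆ rIdeal b := by
  obtain ⟨z, hz⟩ := h
  rintro _ ⟨w, rfl⟩
  exact ⟨z * w, by rw [hz, mul_assoc]⟩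

theorem rIdeal_mul_subset (a b : S) : rIdeal (a * b) ⊆ rIdeal a :=
  rIdeal_subset_rIdeal ⟨b, WithOne.coe_mul a b⟩

theorem rIdeal_eq_rIdeal_mul_of_mem_periodicPts {a b : S} (h : a ∈ periodicPts (· * b)) :
    rIdeal a = rIdeal (a * b) := by
  obtain ⟨n, hn, hper⟩ := mem_periodicPts.mp h
  obtain ⟨m, rfl⟩ := Nat.exists_eq_succ_of_ne_zero hn.ne'
  have ha : (· * b)^[m] (a * b) = a := (iterate_succ_apply _ m a).symm.trans hper
  have hmem := iterate_mul_right_mem_rIdeal (a * b) b m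
  rw [ha] at hmem
  exact (rIdeal_subset_rIdeal hmem).antisymm (rIdeal_mul_subset a b)

end RIdeal

namespace PTrans

variable {Q : Type*}

instance [Finite Q] : Finite (PTrans Q) := inferInstanceAs (Finite (Q → Option Q))

theorem pApply_mul (R : Set Q) (f g : PTrans Q) : pApply R (f * g) = pApply (pApply R f) g := by
  ext t
  constructor
  · rintro ⟨q, hq, hfg⟩
    obtain ⟨s, hs, hst⟩ := Option.bind_eq_some_iff.mp hfg
    exact ⟨s, ⟨q, hq, hs⟩, hst⟩
  · rintro ⟨s, ⟨q, hq, hs⟩, hst⟩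
    exact ⟨q, hq, Option.bind_eq_some_iff.mpr ⟨s, hs, hst⟩⟩

theorem bijOn_of_pApply_eq {R : Set Q} {g : PTrans Q} (hR : R.Finite) (h : pApply R g = R) :
    BijOn g R (some '' R) := by
  have hsurj : some '' R ⊆ g '' R := by
    rintro _ ⟨t, ht, rfl⟩
    obtain ⟨q, hq, hgq⟩ := h.symm ▸ ht
    exact ⟨q, hq, hgq⟩
  have hcard : (some '' R).ncard = R.ncard := ncard_image_of_injective R (Option.some_injective Q)
  have himage : some '' R = g '' R :=
    eq_of_subset_of_ncard_le hsurj (hcard ▸ ncard_image_le hR) (hR.image g)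
  have hinj : InjOn g R := injOn_of_ncard_image_eq (himage ▸ hcard) hR
  exact himage ▸ hinj.bijOn_image

theorem mul_right_injOn {R : Set Q} {g : PTrans Q} (hg : BijOn g R (some '' R)) :
    InjOn (· * g) {f : PTrans Q | pApply univ f ⊆ R} := by
  have hdef : ∀ t ∈ R, g t ≠ none := fun t ht => by
    obtain ⟨s, -, hs⟩ := hg.mapsTo ht
    exact hs ▸ Option.some_ne_none s
  intro f hf f' hf' hff'
  funext q
  exact Option.bind_injOn hdef hg.injOn (fun t ht => hf ⟨q, trivial, ht⟩)
    (fun t ht => hf' ⟨q, trivial, ht⟩) (congrFun hff' q)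

end PTrans

open PTrans in
/-- In a partial transformation semigroup `P` on a finite set
`Q`, if `x, y ∈ P` satisfy `Q·x = Q·(xy)`, then `x R xy` in `P`, i.e.
`x·P¹ = (xy)·P¹`. -/
theorem R_equiv_of_image_eq
    (Q : Type) [Fintype Q] (P : Subsemigroup (PTrans Q)) (x y : ↥P)
    (h : pApply Set.univ (x : PTrans Q) = pApply Set.univ ((x : PTrans Q) * (y : PTrans Q))) :
    rIdeal x = rIdeal (x * y) := by
  have hT : pApply (pApply univ (x : PTrans Q)) y = pApply univ (x : PTrans Q) := by
    rw [← pApply_mul, ← h]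
  set T := pApply univ (x : PTrans Q)
  have hy : BijOn (y : PTrans Q) T (some '' T) := bijOn_of_pApply_eq (toFinite T) hT
  let B : Set P := {a | pApply univ (a : PTrans Q) = T}
  have hmaps : MapsTo (· * y) B B := fun a (ha : pApply univ _ = T) => by
    change pApply univ ((a : PTrans Q) * (y : PTrans Q)) = T
    rw [pApply_mul, ha, hT]
  have hinj : InjOn (· * y) B := fun a ha b hb hab =>
    Subtype.ext (mul_right_injOn hy ha.subset hb.subset (congrArg Subtype.val hab))
  have hx : x ∈ periodicPts (· * y) := (toFinite B).mem_periodicPts_of_injOn hmaps hinj rfl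
  exact rIdeal_eq_rIdeal_mul_of_mem_periodicPts hx
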